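/- Define the operator T on the space B_M of bounded Borel-measurable functions f : [0,M] → [0,∞) with the sup metric by T(f)(x) = E_x[∫_0^{τ_1} e^{-δt} dD_t + e^{-δτ_1} f(X^π_{τ_1})], where τ_1 is the first claim time (exponentially distributed with rate β = Σ_{i=1}^m β_i). Then |T(f_1)(x) − T(f_2)(x)| ≤ (β/(δ+β)) · d(f_1, f_2) for all x ∈ [0,M]; in particular T is a contraction with modulus β/(δ+β) < 1 and has a unique fixed point in B_M. -/
import Mathlib


open MeasureTheory

/-- The dynamic programming operator `T` of the band strategy: `T f x` is the expected value
of the discounted dividends paid up to the first claim time `τ₁ ~ Exp β` (the term `c x`)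
plus the discounted continuation value `e^{-δ τ₁} f (X^π_{τ₁})`, where `ξ x t` is the
(post-claim) state of the controlled process when the first claim occurs at time `t`. -/
noncomputable def Tmap (δ β : ℝ) (c : ℝ → ℝ) (ξ : ℝ → ℝ → ℝ) (f : ℝ → ℝ) (x : ℝ) : ℝ :=
  c x + ∫ t in Set.Ioi (0 : ℝ),
    Real.exp (-δ * t) * (β * Real.exp (-β * t)) * f (ξ x t)

lemma weight_integral (δ β : ℝ) (hδ : 0 < δ) (hβ : 0 < β) :
    (∫ t in Set.Ioi (0 : ℝ), Real.exp (-δ * t) * (β * Real.exp (-β * t)))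
      = β / (δ + β) := by
  have h1 : ∀ t : ℝ, Real.exp (-δ * t) * (β * Real.exp (-β * t))
      = β * Real.exp (-((δ + β) * t)) := by
    intro t
    rw [mul_comm (Real.exp (-δ * t)), mul_assoc, ← Real.exp_add]
    ring_nf
  simp_rw [h1]
  rw [integral_const_mul]
  have hpos : 0 < δ + β := by linarith
  have := integral_comp_mul_left_Ioi (fun u => Real.exp (-u)) 0 hpos
  simp only [mul_zero, smul_eq_mul] at this
  rw [this, integral_exp_neg_Ioi_zero]
  field_simp

lemma weight_integrable (δ β : ℝ) (hδ : 0 < δ) (hβ : 0 < β) :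
    IntegrableOn (fun t => Real.exp (-δ * t) * (β * Real.exp (-β * t)))
      (Set.Ioi (0 : ℝ)) := by
  have h1 : ∀ t : ℝ, Real.exp (-δ * t) * (β * Real.exp (-β * t))
      = β * Real.exp (-((δ + β) * t)) := by
    intro t
    rw [mul_comm (Real.exp (-δ * t)), mul_assoc, ← Real.exp_add]
    ring_nf
  simp_rw [h1]
  have hpos : 0 < δ + β := by linarith
  have := exp_neg_integrableOn_Ioi (0 : ℝ) hpos
  simp_rw [neg_mul] at this
  exact this.const_mul β

lemma integrand_integrable (δ β : ℝ) (hδ : 0 < δ) (hβ : 0 < β)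
    (f : ℝ → ℝ) (hf : Measurable f) (C : ℝ) (hC : ∀ y, |f y| ≤ C)
    (g : ℝ → ℝ) (hg : Measurable g) :
    IntegrableOn (fun t => Real.exp (-δ * t) * (β * Real.exp (-β * t)) * f (g t))
      (Set.Ioi (0 : ℝ)) := by
  have hm : Measurable (fun t => Real.exp (-δ * t) * (β * Real.exp (-β * t)) * f (g t)) := by
    fun_prop
  apply Integrable.mono' ((weight_integrable δ β hδ hβ).mul_const C)
    hm.aestronglyMeasurable
  filter_upwards [self_mem_ae_restrict (measurableSet_Ioi (a := (0:ℝ)))] with t ht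
  have h0 : 0 ≤ Real.exp (-δ * t) * (β * Real.exp (-β * t)) :=
    mul_nonneg (Real.exp_pos _).le (mul_nonneg hβ.le (Real.exp_pos _).le)
  rw [Real.norm_eq_abs, abs_mul, abs_of_nonneg h0]
  exact mul_le_mul_of_nonneg_left (hC _) h0

/-- The operator `T` satisfies `|T f₁ x − T f₂ x| ≤ (β/(δ+β)) · d(f₁, f₂)` on `[0, M]`;
in particular it is a contraction with modulus `β/(δ+β) < 1` and its fixed point in the
space of bounded Borel measurable functions on `[0, M]` is unique. -/
theorem Tmap_contraction
    (δ β M : ℝ) (hδ : 0 < δ) (hβ : 0 < β) (hM : 0 < M)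
    (c : ℝ → ℝ) (ξ : ℝ → ℝ → ℝ)
    (hξ : ∀ x ∈ Set.Icc (0 : ℝ) M, ∀ t ∈ Set.Ioi (0 : ℝ), ξ x t ∈ Set.Icc (0 : ℝ) M)
    (hξm : ∀ x, Measurable (ξ x)) :
    (∀ (f₁ f₂ : ℝ → ℝ) (d : ℝ),
      Measurable f₁ → Measurable f₂ →
      (∃ C, ∀ y, |f₁ y| ≤ C) → (∃ C, ∀ y, |f₂ y| ≤ C) →
      (∀ y ∈ Set.Icc (0 : ℝ) M, |f₁ y - f₂ y| ≤ d) →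
      ∀ x ∈ Set.Icc (0 : ℝ) M,
        |Tmap δ β c ξ f₁ x - Tmap δ β c ξ f₂ x| ≤ (β / (δ + β)) * d) ∧
    β / (δ + β) < 1 ∧
    (∀ g₁ g₂ : ℝ → ℝ,
      Measurable g₁ → Measurable g₂ →
      (∃ C, ∀ y, |g₁ y| ≤ C) → (∃ C, ∀ y, |g₂ y| ≤ C) →
      Set.EqOn (Tmap δ β c ξ g₁) g₁ (Set.Icc 0 M) →
      Set.EqOn (Tmap δ β c ξ g₂) g₂ (Set.Icc 0 M) →
      Set.EqOn g₁ g₂ (Set.Icc 0 M)) := by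
  have hpos : 0 < δ + β := by linarith
  have hr1 : β / (δ + β) < 1 := by
    rw [div_lt_one hpos]; linarith
  have hr0 : 0 ≤ β / (δ + β) := div_nonneg hβ.le hpos.le
  have main : ∀ (f₁ f₂ : ℝ → ℝ) (d : ℝ),
      Measurable f₁ → Measurable f₂ →
      (∃ C, ∀ y, |f₁ y| ≤ C) → (∃ C, ∀ y, |f₂ y| ≤ C) →
      (∀ y ∈ Set.Icc (0 : ℝ) M, |f₁ y - f₂ y| ≤ d) →
      ∀ x ∈ Set.Icc (0 : ℝ) M,
        |Tmap δ β c ξ f₁ x - Tmap δ β c ξ f₂ x| ≤ (β / (δ + β)) * d := by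
    rintro f₁ f₂ d hm₁ hm₂ ⟨C₁, hC₁⟩ ⟨C₂, hC₂⟩ hd x hx
    have hI₁ := integrand_integrable δ β hδ hβ f₁ hm₁ C₁ hC₁ (ξ x) (hξm x)
    have hI₂ := integrand_integrable δ β hδ hβ f₂ hm₂ C₂ hC₂ (ξ x) (hξm x)
    have hsub : Tmap δ β c ξ f₁ x - Tmap δ β c ξ f₂ x
        = ∫ t in Set.Ioi (0 : ℝ),
            (Real.exp (-δ * t) * (β * Real.exp (-β * t)) * f₁ (ξ x t)
              - Real.exp (-δ * t) * (β * Real.exp (-β * t)) * f₂ (ξ x t)) := by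
      rw [integral_sub hI₁ hI₂]; simp [Tmap]
    rw [hsub]
    calc |∫ t in Set.Ioi (0 : ℝ),
            (Real.exp (-δ * t) * (β * Real.exp (-β * t)) * f₁ (ξ x t)
              - Real.exp (-δ * t) * (β * Real.exp (-β * t)) * f₂ (ξ x t))|
        ≤ ∫ t in Set.Ioi (0 : ℝ), Real.exp (-δ * t) * (β * Real.exp (-β * t)) * d := by
          rw [← Real.norm_eq_abs]
          apply (norm_integral_le_integral_norm _).trans
          simp only [Real.norm_eq_abs]
          apply integral_mono_of_nonneg
          · filter_upwards with t using abs_nonneg _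
          · exact (weight_integrable δ β hδ hβ).mul_const d
          · filter_upwards [self_mem_ae_restrict (measurableSet_Ioi (a := (0:ℝ)))] with t ht
            have h0 : 0 ≤ Real.exp (-δ * t) * (β * Real.exp (-β * t)) :=
              mul_nonneg (Real.exp_pos _).le (mul_nonneg hβ.le (Real.exp_pos _).le)
            rw [← mul_sub, abs_mul, abs_of_nonneg h0]
            exact mul_le_mul_of_nonneg_left (hd _ (hξ x hx t ht)) h0
      _ = (β / (δ + β)) * d := by
          rw [integral_mul_const, weight_integral δ β hδ hβ]
  refine ⟨main, hr1, ?_⟩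
  rintro g₁ g₂ hm₁ hm₂ ⟨C₁, hC₁⟩ ⟨C₂, hC₂⟩ hfix₁ hfix₂
  set r := β / (δ + β) with hr
  have key : ∀ n : ℕ, ∀ y ∈ Set.Icc (0 : ℝ) M, |g₁ y - g₂ y| ≤ r ^ n * (C₁ + C₂) := by
    intro n
    induction n with
    | zero =>
      intro y _
      simpa using (abs_sub _ _).trans (add_le_add (hC₁ y) (hC₂ y))
    | succ n ih =>
      intro y hy
      have := main g₁ g₂ (r ^ n * (C₁ + C₂)) hm₁ hm₂ ⟨C₁, hC₁⟩ ⟨C₂, hC₂⟩ ih y hy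
      rw [hfix₁ hy, hfix₂ hy] at this
      calc |g₁ y - g₂ y| ≤ r * (r ^ n * (C₁ + C₂)) := this
        _ = r ^ (n + 1) * (C₁ + C₂) := by ring
  intro y hy
  have hlim : Filter.Tendsto (fun n : ℕ => r ^ n * (C₁ + C₂)) Filter.atTop (nhds 0) := by
    simpa using (tendsto_pow_atTop_nhds_zero_of_lt_one hr0 hr1).mul_const (C₁ + C₂)
  have : |g₁ y - g₂ y| ≤ 0 :=
    ge_of_tendsto hlim (Filter.Eventually.of_forall fun n => key n y hy)
  have := abs_nonneg (g₁ y - g₂ y)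
  have : g₁ y - g₂ y = 0 := abs_eq_zero.mp (le_antisymm ‹|g₁ y - g₂ y| ≤ 0› this)
  linarith
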